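/- arXiv:1804.03845 — 3 statements merged into one kernel-verified Lean document; each statement's English description precedes it below -/
import Mathlib

section
/- Let a<b be real numbers, let g:[a,b]→ℝ be a bounded càdlàg function and let f:[a,b]→ℝ be a càdlàg function of bounded variation. Then the deterministic forward integral ∫_{]a,b]} g(x) d⁻f(x) exists and equals the Lebesgue–Stieltjes integral ∫_{]a,b]} g(x−) df(x), where g(x−) denotes the left limit of g at x and df is the Lebesgue–Stieltjes measure associated with f. In particular, if g ≡ 1 then ∫_{]a,b]} g(x) d⁻f(x) = f(b) − f(a). -/
open MeasureTheory Set Filter Topology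

/-! By Fubini, integrating the forward difference quotient of a Stieltjes function `F` against `g`
over `]a,b]` is the same as integrating, against `dF(y)`, the left averages
`ε⁻¹ ∫_{[y-ε,y[ ∩ ]a,b]} g`. These averages are bounded by `sup |g|` and tend to `g(y-)` as
`ε ↓ 0` for every `y ∈ ]a,b]` (the fundamental theorem of calculus from the left), so dominated
convergence yields `∫_{]a,b]} g(y-) dF(y)`. The case of bounded variation follows by linearity. -/

theorem measurable_of_continuousWithinAt_Ici {β : Type*} [TopologicalSpace β]
    [TopologicalSpace.PseudoMetrizableSpace β] [MeasurableSpace β] [BorelSpace β] {g : ℝ → β}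
    (hg : ∀ x, ContinuousWithinAt g (Ici x) x) : Measurable g := by
  set grid : ℕ → ℝ → ℝ := fun n x => (⌈(n + 1) * x⌉ : ℝ) / (n + 1)
  have grid_mem (n : ℕ) (x : ℝ) : grid n x ∈ Icc x (x + 1 / (n + 1)) := by
    have hn : (0 : ℝ) < n + 1 := by positivity
    constructor
    · rw [le_div_iff₀ hn, mul_comm]; exact Int.le_ceil _
    · have h := (Int.ceil_lt_add_one ((n + 1) * x)).le
      rw [div_le_iff₀ hn]
      field_simp
      linarith
  have grid_tendsto (x : ℝ) : Tendsto (grid · x) atTop (𝓝[≥] x) := by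
    refine tendsto_nhdsWithin_of_tendsto_nhds_of_eventually_within _ ?_
      (.of_forall fun n => (grid_mem n x).1)
    have h := tendsto_one_div_add_atTop_nhds_zero_nat.const_add x
    rw [add_zero] at h
    exact tendsto_of_tendsto_of_tendsto_of_le_of_le tendsto_const_nhds h
      (fun n => (grid_mem n x).1) fun n => (grid_mem n x).2
  refine measurable_of_tendsto_metrizable (f := fun n x => g (grid n x)) (fun n => ?_)
    (tendsto_pi_nhds.2 fun x => (hg x).tendsto.comp (grid_tendsto x))
  exact (measurable_of_countable fun k : ℤ => g (k / (n + 1))).comp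
    (Int.measurable_ceil.comp (measurable_id.const_mul _))

theorem continuousWithinAt_Ici_comp_projIcc {β : Type*} [TopologicalSpace β] {a b : ℝ}
    (hab : a ≤ b) {g : ℝ → β} (hg : ∀ x ∈ Ico a b, ContinuousWithinAt g (Ici x) x) (x : ℝ) :
    ContinuousWithinAt (fun y => g (projIcc a b hab y)) (Ici x) x := by
  set p := projIcc a b hab
  rcases (p x).2.2.lt_or_eq with hxb | hxb
  · exact ContinuousWithinAt.comp (f := fun y => (p y : ℝ)) (hg _ ⟨(p x).2.1, hxb⟩)
      continuous_projIcc.subtype_val.continuousWithinAt fun y hy => monotone_projIcc hab hy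
  · have hconst : ∀ y ∈ Ici x, p y = p x := fun y hy =>
      Subtype.ext <| le_antisymm ((p y).2.2.trans hxb.ge) (monotone_projIcc hab hy)
    exact (continuousWithinAt_const (b := g (p x))).congr (fun y hy => by rw [hconst y hy]) rfl

theorem aestronglyMeasurable_restrict_Icc_of_continuousWithinAt_Ici {β : Type*}
    [TopologicalSpace β] [TopologicalSpace.PseudoMetrizableSpace β]
    [SecondCountableTopology β] [MeasurableSpace β] [BorelSpace β] {a b : ℝ} (hab : a ≤ b)
    {g : ℝ → β} (hg : ∀ x ∈ Ico a b, ContinuousWithinAt g (Ici x) x) (μ : Measure ℝ) :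
    AEStronglyMeasurable g (μ.restrict (Icc a b)) := by
  refine (measurable_of_continuousWithinAt_Ici
    (continuousWithinAt_Ici_comp_projIcc hab hg)).aestronglyMeasurable.congr ?_
  filter_upwards [ae_restrict_mem measurableSet_Icc] with x hx
  rw [projIcc_of_mem hab hx]

section Fubini

variable {μ ν : Measure ℝ} {G : ℝ → ℝ}

theorem mul_indicator_Ioc_eq_indicator_Ico (ε x y : ℝ) :
    G x * (Ioc x (x + ε)).indicator 1 y = (Ico (y - ε) y).indicator G x := by
  have hmem : y ∈ Ioc x (x + ε) ↔ x ∈ Ico (y - ε) y := by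
    simp only [mem_Ioc, mem_Ico]; constructor <;> rintro ⟨h₁, h₂⟩ <;> constructor <;> linarith
  by_cases hx : x ∈ Ico (y - ε) y <;> simp [indicator_of_mem, indicator_of_notMem, hx, hmem]

variable [IsFiniteMeasure μ]

theorem integrable_mul_indicator_Ioc (hG : Integrable G ν) (ε : ℝ) :
    Integrable (fun p : ℝ × ℝ => G p.1 * (Ioc p.1 (p.1 + ε)).indicator 1 p.2) (ν.prod μ) := by
  have hS : MeasurableSet {p : ℝ × ℝ | p.2 ∈ Ioc p.1 (p.1 + ε)} :=
    (measurableSet_lt measurable_fst measurable_snd).inter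
      (measurableSet_le measurable_snd (measurable_fst.add_const ε))
  refine (hG.comp_fst μ).mul_bdd (c := 1)
    (measurable_const.indicator hS : Measurable fun p : ℝ × ℝ => _).aestronglyMeasurable
    (.of_forall fun p => ?_)
  by_cases hp : p.2 ∈ Ioc p.1 (p.1 + ε) <;> simp [hp]

theorem integrable_mul_measureReal_Ioc (hG : Integrable G ν) (ε : ℝ) :
    Integrable (fun x => G x * μ.real (Ioc x (x + ε))) ν := by
  simpa only [integral_const_mul, integral_indicator_one measurableSet_Ioc] using
    (integrable_mul_indicator_Ioc (μ := μ) hG ε).integral_prod_left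

variable [SFinite ν]

theorem integral_mul_measureReal_Ioc (hG : Integrable G ν) (ε : ℝ) :
    ∫ x, G x * μ.real (Ioc x (x + ε)) ∂ν = ∫ y, ∫ x in Ico (y - ε) y, G x ∂ν ∂μ := by
  calc ∫ x, G x * μ.real (Ioc x (x + ε)) ∂ν
      = ∫ x, ∫ y, G x * (Ioc x (x + ε)).indicator 1 y ∂μ ∂ν := by
        simp only [integral_const_mul, integral_indicator_one measurableSet_Ioc]
    _ = ∫ y, ∫ x, G x * (Ioc x (x + ε)).indicator 1 y ∂ν ∂μ :=
        integral_integral_swap (integrable_mul_indicator_Ioc hG ε)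
    _ = ∫ y, ∫ x in Ico (y - ε) y, G x ∂ν ∂μ := by
        simp only [mul_indicator_Ioc_eq_indicator_Ico, integral_indicator measurableSet_Ico]

theorem aestronglyMeasurable_setIntegral_Ico (hG : Integrable G ν) (ε : ℝ) :
    AEStronglyMeasurable (fun y => ∫ x in Ico (y - ε) y, G x ∂ν) μ := by
  simpa only [mul_indicator_Ioc_eq_indicator_Ico, integral_indicator measurableSet_Ico] using
    (integrable_mul_indicator_Ioc hG ε).integral_prod_right.aestronglyMeasurable

end Fubini

theorem tendsto_inv_mul_setIntegral_Ico {G : ℝ → ℝ} {c y L : ℝ} (hc : c < y)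
    (hG : IntegrableOn G (Ioc c y)) (hL : Tendsto G (𝓝[<] y) (𝓝 L)) :
    Tendsto (fun ε => ε⁻¹ * ∫ x in Ico (y - ε) y, G x) (𝓝[>] 0) (𝓝 L) := by
  have hint : IntervalIntegrable G volume c y :=
    (intervalIntegrable_iff_integrableOn_Ioc_of_le hc.le).2 hG
  have hae : 𝓝[≤] y ⊓ ae volume ≤ 𝓝[<] y :=
    calc 𝓝[≤] y ⊓ ae volume ≤ 𝓝[≤] y ⊓ 𝓟 {y}ᶜ :=
          inf_le_inf_left _ (le_principal_iff.2 (compl_mem_ae_iff.2 (measure_singleton y)))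
      _ = 𝓝[<] y := by rw [← nhdsWithin_inter', ← Iic_sdiff_right, sdiff_eq]
  have hderiv : HasDerivWithinAt (fun u => ∫ x in c..u, G x) L (Iio y) y :=
    hasDerivWithinAt_Iio_iff_Iic.2 <|
      intervalIntegral.integral_hasDerivWithinAt_of_tendsto_ae_right hint
        ⟨Ioc c y, Ioc_mem_nhdsLE hc, hG.aestronglyMeasurable⟩ (hL.mono_left hae)
  have hshift : Tendsto (fun ε => y - ε) (𝓝[>] 0) (𝓝[<] y) := by
    refine tendsto_nhdsWithin_of_tendsto_nhds_of_eventually_within _ ?_ ?_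
    · simpa using ((continuous_sub_left y).tendsto 0).mono_left nhdsWithin_le_nhds
    · filter_upwards [self_mem_nhdsWithin] with ε hε using sub_lt_self y hε
  refine (((hasDerivWithinAt_iff_tendsto_slope' self_notMem_Iio).1 hderiv).comp hshift).congr' ?_
  filter_upwards [Ioo_mem_nhdsGT (sub_pos.2 hc)] with ε hε
  have hint' : IntervalIntegrable G volume c (y - ε) := hint.mono_set <|
    uIcc_subset_uIcc_left (by rw [uIcc_of_le hc.le]; constructor <;> linarith [hε.1, hε.2])
  rw [Function.comp_apply, slope_def_field, ← neg_sub,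
    intervalIntegral.integral_interval_sub_left hint hint',
    intervalIntegral.integral_of_le (by linarith [hε.1]), integral_Ico_eq_integral_Ioc]
  field_simp
  ring

instance IsLocallyFiniteMeasure.isFiniteMeasure_restrict_Ioc {μ : Measure ℝ}
    [IsLocallyFiniteMeasure μ] (a b : ℝ) : IsFiniteMeasure (μ.restrict (Ioc a b)) :=
  isFiniteMeasure_restrict.2 measure_Ioc_lt_top.ne

theorem tendsto_setIntegral_mul_measureReal_Ioc_div (μ : Measure ℝ) [IsLocallyFiniteMeasure μ]
    {a b M : ℝ} {G L : ℝ → ℝ} (hGm : AEStronglyMeasurable G (volume.restrict (Ioc a b)))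
    (hGM : ∀ x ∈ Ioc a b, |G x| ≤ M) (hL : ∀ y ∈ Ioc a b, Tendsto G (𝓝[<] y) (𝓝 (L y))) :
    Tendsto (fun ε => ∫ x in Ioc a b, G x * ((μ.restrict (Ioc a b)).real (Ioc x (x + ε)) / ε))
      (𝓝[>] 0) (𝓝 (∫ y in Ioc a b, L y ∂μ)) := by
  set ν := volume.restrict (Ioc a b)
  have hG : IntegrableOn G (Ioc a b) := IntegrableOn.of_bound measure_Ioc_lt_top hGm M <| by
    filter_upwards [ae_restrict_mem measurableSet_Ioc] with x hx using hGM x hx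
  have hfubini (ε : ℝ) :
      ∫ x in Ioc a b, G x * ((μ.restrict (Ioc a b)).real (Ioc x (x + ε)) / ε)
        = ∫ y in Ioc a b, ε⁻¹ * ∫ x in Ico (y - ε) y, G x ∂ν ∂μ := by
    rw [integral_const_mul, ← integral_mul_measureReal_Ioc hG, ← integral_const_mul]
    congr 1 with x
    ring
  refine Tendsto.congr (fun ε => (hfubini ε).symm) ?_
  refine tendsto_integral_filter_of_dominated_convergence (fun _ => M)
    (.of_forall fun ε => (aestronglyMeasurable_setIntegral_Ico hG ε).const_mul _) ?_
    (integrable_const M) ?_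
  · filter_upwards [self_mem_nhdsWithin] with ε (hε : 0 < ε)
    filter_upwards [ae_restrict_mem measurableSet_Ioc] with y hy
    have hM : 0 ≤ M := (abs_nonneg _).trans (hGM y hy)
    have hνε : ν.real (Ico (y - ε) y) ≤ ε := by
      rw [measureReal_restrict_apply measurableSet_Ico]
      exact (measureReal_mono inter_subset_left measure_Ico_lt_top.ne).trans_eq (by simp [hε.le])
    have hbound : ‖∫ x in Ico (y - ε) y, G x ∂ν‖ ≤ M * ε := by
      refine (norm_setIntegral_le_of_norm_le_const_ae' (measure_lt_top _ _) ?_).trans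
        (by gcongr)
      filter_upwards [ae_restrict_mem measurableSet_Ioc] with x hx _ using hGM x hx
    calc ‖ε⁻¹ * ∫ x in Ico (y - ε) y, G x ∂ν‖
        = ε⁻¹ * ‖∫ x in Ico (y - ε) y, G x ∂ν‖ := by
          rw [norm_mul, norm_inv, Real.norm_of_nonneg hε.le]
      _ ≤ ε⁻¹ * (M * ε) := by gcongr
      _ = M := by field_simp
  · filter_upwards [ae_restrict_mem measurableSet_Ioc] with y hy
    refine (tendsto_inv_mul_setIntegral_Ico hy.1 (hG.mono_set (Ioc_subset_Ioc_right hy.2))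
      (hL y hy)).congr' ?_
    filter_upwards [Ioo_mem_nhdsGT (sub_pos.2 hy.1)] with ε hε
    rw [Measure.restrict_restrict measurableSet_Ico, inter_eq_left.2]
    exact fun x hx => ⟨by linarith [hx.1, hε.2], hx.2.le.trans hy.2⟩

namespace StieltjesFunction

variable (F : StieltjesFunction ℝ) {a b : ℝ} {G : ℝ → ℝ}

theorem measureReal_Ioc {x y : ℝ} (hxy : x ≤ y) : F.measure.real (Ioc x y) = F y - F x := by
  rw [measureReal_def, F.measure_Ioc, ENNReal.toReal_ofReal (sub_nonneg.2 (F.mono hxy))]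

theorem measureReal_restrict_Ioc_Ioc {x ε : ℝ} (hx : x ∈ Ioc a b) (hε : 0 ≤ ε) :
    (F.measure.restrict (Ioc a b)).real (Ioc x (x + ε)) = F (min (x + ε) b) - F x := by
  rw [measureReal_restrict_apply measurableSet_Ioc, Ioc_inter_Ioc, max_eq_left hx.1.le,
    F.measureReal_Ioc (le_min (by linarith) hx.2)]

theorem integrableOn_mul_slope (hG : IntegrableOn G (Ioc a b)) {ε : ℝ} (hε : 0 ≤ ε) :
    IntegrableOn (fun x => G x * ((F (min (x + ε) b) - F x) / ε)) (Ioc a b) := by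
  refine ((integrable_mul_measureReal_Ioc (μ := F.measure.restrict (Ioc a b)) hG ε).div_const
    ε).congr ?_
  filter_upwards [ae_restrict_mem measurableSet_Ioc] with x hx
  rw [F.measureReal_restrict_Ioc_Ioc hx hε, mul_div_assoc]

theorem tendsto_setIntegral_mul_slope {M : ℝ} {L : ℝ → ℝ}
    (hGm : AEStronglyMeasurable G (volume.restrict (Ioc a b)))
    (hGM : ∀ x ∈ Ioc a b, |G x| ≤ M) (hL : ∀ y ∈ Ioc a b, Tendsto G (𝓝[<] y) (𝓝 (L y))) :
    Tendsto (fun ε => ∫ x in Ioc a b, G x * ((F (min (x + ε) b) - F x) / ε))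
      (𝓝[>] 0) (𝓝 (∫ y in Ioc a b, L y ∂F.measure)) := by
  refine (tendsto_setIntegral_mul_measureReal_Ioc_div F.measure hGm hGM hL).congr' ?_
  filter_upwards [self_mem_nhdsWithin] with ε (hε : 0 < ε)
  refine setIntegral_congr_fun measurableSet_Ioc fun x hx => ?_
  rw [F.measureReal_restrict_Ioc_Ioc hx hε.le]

end StieltjesFunction

/-- Let `a < b`, let `g : [a,b] → ℝ` be a bounded càdlàg function and let
`f : [a,b] → ℝ` be a càdlàg function of bounded variation (encoded as the difference of two
Stieltjes functions `F₁ - F₂` on `[a,b]`; `dF := dF₁ - dF₂` is the associated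
Lebesgue–Stieltjes measure).  Then the deterministic forward integral
`∫_{]a,b]} g(x) d⁻f(x)` exists and equals the Lebesgue–Stieltjes integral
`∫_{]a,b]} g(x−) df(x)`.  In particular, if `g ≡ 1`, this value is `f(b) - f(a)`. -/
theorem forward_integral_of_bounded_variation
    (a b : ℝ) (hab : a < b)
    (g : ℝ → ℝ)
    -- `g` is bounded on `[a,b]`
    (hg_bdd : ∃ M : ℝ, ∀ x ∈ Set.Icc a b, |g x| ≤ M)
    -- `g` is càdlàg on `[a,b]` : right-continuous with left limits
    (hg_right : ∀ x ∈ Set.Ico a b, ContinuousWithinAt g (Set.Ici x) x)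
    (hg_left : ∀ x ∈ Set.Ioc a b,
      Tendsto g (nhdsWithin x (Set.Iio x)) (nhds (Function.leftLim g x)))
    -- `f` is càdlàg of bounded variation on `[a,b]` : difference of two Stieltjes functions
    (F₁ F₂ : StieltjesFunction ℝ)
    (f : ℝ → ℝ)
    (hf : ∀ x ∈ Set.Icc a b, f x = F₁ x - F₂ x)
    -- the extension `f_J` of `f` to the real line
    (fJ : ℝ → ℝ)
    (hfJ : ∀ x, fJ x = if x < a then f a else if b < x then f b else f x) :
    Tendsto
        (fun ε : ℝ => ∫ x in Set.Ioc a b, g x * ((fJ (x + ε) - fJ x) / ε))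
        (𝓝[>] 0)
        (𝓝 ((∫ x in Set.Ioc a b, Function.leftLim g x ∂F₁.measure)
            - ∫ x in Set.Ioc a b, Function.leftLim g x ∂F₂.measure))
      ∧ ((∀ x, g x = 1) →
          (∫ x in Set.Ioc a b, Function.leftLim g x ∂F₁.measure)
            - (∫ x in Set.Ioc a b, Function.leftLim g x ∂F₂.measure) = f b - f a) := by
  obtain ⟨M, hgM⟩ := hg_bdd
  have hgM_Ioc (x : ℝ) (hx : x ∈ Ioc a b) : |g x| ≤ M := hgM x (Ioc_subset_Icc_self hx)
  have hgm : AEStronglyMeasurable g (volume.restrict (Ioc a b)) :=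
    (aestronglyMeasurable_restrict_Icc_of_continuousWithinAt_Ici hab.le hg_right _).mono_set
      Ioc_subset_Icc_self
  have hgi : IntegrableOn g (Ioc a b) := IntegrableOn.of_bound measure_Ioc_lt_top hgm M <| by
    filter_upwards [ae_restrict_mem measurableSet_Ioc] with x hx using hgM_Ioc x hx
  have hfJ_eq (y : ℝ) (hy : a ≤ y) : fJ y = F₁ (min y b) - F₂ (min y b) := by
    rw [← hf _ ⟨le_min hy hab.le, min_le_right _ _⟩, hfJ, if_neg hy.not_gt]
    split_ifs with hby
    · rw [min_eq_right hby.le]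
    · rw [min_eq_left (not_lt.1 hby)]
  refine ⟨?_, fun hg1 => ?_⟩
  · refine ((F₁.tendsto_setIntegral_mul_slope hgm hgM_Ioc hg_left).sub
      (F₂.tendsto_setIntegral_mul_slope hgm hgM_Ioc hg_left)).congr' ?_
    filter_upwards [self_mem_nhdsWithin] with ε (hε : 0 < ε)
    rw [← integral_sub (F₁.integrableOn_mul_slope hgi hε.le) (F₂.integrableOn_mul_slope hgi hε.le)]
    refine setIntegral_congr_fun measurableSet_Ioc fun x hx => ?_
    rw [hfJ_eq x hx.1.le, hfJ_eq (x + ε) (by linarith [hx.1]), min_eq_left hx.2]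
    ring
  · obtain rfl : g = fun _ => 1 := funext hg1
    rw [hf a ⟨le_rfl, hab.le⟩, hf b ⟨hab.le, le_rfl⟩]
    simp only [continuousWithinAt_const.leftLim_eq, setIntegral_const, smul_eq_mul, mul_one,
      F₁.measureReal_Ioc hab.le, F₂.measureReal_Ioc hab.le]
    ring
end

section
/- Let a<b be real numbers, let g:[a,b]→ℝ be a càdlàg function of bounded variation and let f:[a,b]→ℝ be continuous. Then the deterministic forward integral over the half-open interval ∫_{]a,b]} g(x) d⁻f(x) exists and equals g(b)f(b) − g(a)f(a) − ∫_{]a,b]} f(x) dg(x), where dg denotes the Lebesgue–Stieltjes measure associated with g. -/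
open MeasureTheory Set Filter Topology

/-!
The forward average `A_ε f x = ε⁻¹ ∫_x^{x+ε} f` of a continuous `f` has derivative
`(f (x + ε) - f x) / ε`, so for a Stieltjes function `G` the ε-integral is `∫_{]a,b]} G dA_ε f`.
Integrating by parts against `dG` turns it into
`G b · A_ε f b - G a · A_ε f a - ∫_{]a,b]} A_ε f dG`,
and `A_ε f → f` pointwise and boundedly as `ε ↓ 0`. Apply this to `f_J`, which is continuous
on `ℝ`, and to both monotone parts of `g = G₁ - G₂`.
-/

theorem ContinuousOn.continuous_of_const_off_Icc {α β : Type*} [LinearOrder α]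
    [TopologicalSpace α] [OrderTopology α] [TopologicalSpace β] {a b : α} (hab : a ≤ b)
    {h : α → β} (hc : ContinuousOn h (Icc a b)) (ha : ∀ x < a, h x = h a)
    (hb : ∀ x, b < x → h x = h b) : Continuous h := by
  rw [← IccExtend_eq_self hab h ha hb]
  exact continuous_IccExtend_iff.2 (continuousOn_iff_continuous_domRestrict.1 hc)

section ForwardAverage

noncomputable def forwardAverage (f : ℝ → ℝ) (ε x : ℝ) : ℝ := ε⁻¹ * ∫ y in x..x + ε, f y

variable {f : ℝ → ℝ}

theorem hasDerivAt_forwardAverage (hf : Continuous f) (ε x : ℝ) :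
    HasDerivAt (forwardAverage f ε) ((f (x + ε) - f x) / ε) x := by
  have hF : forwardAverage f ε =
      fun x => ε⁻¹ * ((∫ y in (0 : ℝ)..x + ε, f y) - ∫ y in (0 : ℝ)..x, f y) := by
    ext x
    rw [forwardAverage, intervalIntegral.integral_interval_sub_left
      (hf.intervalIntegrable _ _) (hf.intervalIntegrable _ _)]
  rw [hF, div_eq_inv_mul]
  exact (((hf.integral_hasStrictDerivAt 0 (x + ε)).hasDerivAt.comp_add_const x ε).sub
    (hf.integral_hasStrictDerivAt 0 x).hasDerivAt).const_mul ε⁻¹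

theorem continuous_forwardAverage (hf : Continuous f) (ε : ℝ) : Continuous (forwardAverage f ε) :=
  continuous_iff_continuousAt.2 fun x => (hasDerivAt_forwardAverage hf ε x).continuousAt

theorem tendsto_forwardAverage (hf : Continuous f) (x : ℝ) :
    Tendsto (fun ε => forwardAverage f ε x) (𝓝[>] 0) (𝓝 (f x)) := by
  have h := hasDerivAt_iff_tendsto_slope_zero.1
    (hf.integral_hasStrictDerivAt x x).hasDerivAt
  simp only [intervalIntegral.integral_same, sub_zero, smul_eq_mul] at h
  exact h.mono_left (nhdsWithin_mono _ fun ε hε => ne_of_gt hε)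

theorem abs_forwardAverage_le {ε x C : ℝ} (hε : 0 < ε)
    (hC : ∀ y ∈ Icc x (x + ε), |f y| ≤ C) : |forwardAverage f ε x| ≤ C := by
  have h : ‖∫ y in x..x + ε, f y‖ ≤ C * |x + ε - x| :=
    intervalIntegral.norm_integral_le_of_norm_le_const fun y hy =>
      hC y (Ioc_subset_Icc_self (by simpa [uIoc_of_le (by linarith : x ≤ x + ε)] using hy))
  rw [add_sub_cancel_left, abs_of_pos hε, Real.norm_eq_abs] at h
  rw [forwardAverage, abs_mul, abs_inv, abs_of_pos hε]
  calc ε⁻¹ * |∫ y in x..x + ε, f y| ≤ ε⁻¹ * (C * ε) := by gcongr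
    _ = C := by field_simp

end ForwardAverage

namespace StieltjesFunction

variable (G : StieltjesFunction ℝ) {a b : ℝ}

instance isFiniteMeasure_restrict_Ioc : IsFiniteMeasure (G.measure.restrict (Ioc a b)) :=
  ⟨by rw [Measure.restrict_apply_univ, G.measure_Ioc]; exact ENNReal.ofReal_lt_top⟩

theorem measureReal_Ioc_s2 (hab : a ≤ b) : G.measure.real (Ioc a b) = G b - G a := by
  rw [measureReal_def, G.measure_Ioc, ENNReal.toReal_ofReal (sub_nonneg.2 (G.mono hab))]

theorem integral_Ioc_mul_deriv {φ φ' : ℝ → ℝ} (hab : a ≤ b)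
    (hφ : ContinuousOn φ (Icc a b)) (hφ' : ∀ x ∈ Ioo a b, HasDerivAt φ (φ' x) x)
    (hint : IntegrableOn φ' (Ioc a b)) :
    ∫ x in Ioc a b, G x * φ' x = G b * φ b - G a * φ a - ∫ x in Ioc a b, φ x ∂G.measure := by
  have hFTC : ∀ t ∈ Icc a b, ∫ x in Ioc t b, φ' x = φ b - φ t := fun t ht => by
    rw [← intervalIntegral.integral_of_le ht.2]
    exact intervalIntegral.integral_eq_sub_of_hasDerivAt_of_le ht.2
      (hφ.mono (Icc_subset_Icc_left ht.1)) (fun x hx => hφ' x (Ioo_subset_Ioo_left ht.1 hx))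
      ((intervalIntegrable_iff_integrableOn_Ioc_of_le ht.2).2
        (hint.mono_set (Ioc_subset_Ioc_left ht.1)))
  -- Fubini for `(x, t) ↦ 𝟙[t ≤ x] φ' x` turns `G x - G a = dG ]a, x]` into `φ b - φ t`.
  have hFubini : Integrable (fun p : ℝ × ℝ => (Iic p.1).indicator (fun _ => φ' p.1) p.2)
      ((volume.restrict (Ioc a b)).prod (G.measure.restrict (Ioc a b))) :=
    ((hint.comp_fst _).indicator (measurableSet_le measurable_snd measurable_fst)).congr
      (Eventually.of_forall fun p => by simp [indicator])
  have hintegral_dG : ∀ x ∈ Ioc a b,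
      ∫ t in Ioc a b, (Iic x).indicator (fun _ => φ' x) t ∂G.measure = (G x - G a) * φ' x :=
    fun x hx => by
      rw [integral_indicator_const _ measurableSet_Iic,
        measureReal_restrict_apply measurableSet_Iic, inter_comm, Ioc_inter_Iic, min_eq_right hx.2, G.measureReal_Ioc_s2 hx.1.le, smul_eq_mul]
  have hintegral_dx : ∀ t ∈ Ioc a b,
      ∫ x in Ioc a b, (Iic x).indicator (fun _ => φ' x) t = φ b - φ t := fun t ht => by
    have hind : ∀ x, (Iic x).indicator (fun _ => φ' x) t = (Ici t).indicator φ' x := fun x => by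
      simp [indicator]
    have hset : Ioc a b ∩ Ici t = Icc t b := by
      ext x
      simp only [mem_inter_iff, mem_Ioc, mem_Ici, mem_Icc]
      constructor
      · exact fun h => ⟨h.2, h.1.2⟩
      · exact fun h => ⟨⟨ht.1.trans_le h.1, h.2⟩, h.1⟩
    simp_rw [hind]
    rw [setIntegral_indicator measurableSet_Ici, hset, integral_Icc_eq_integral_Ioc,
      hFTC t ⟨ht.1.le, ht.2⟩]
  have hφμ : IntegrableOn φ (Ioc a b) G.measure :=
    (hφ.integrableOn_compact isCompact_Icc).mono_set Ioc_subset_Icc_self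
  have hswap := integral_integral_swap (f := fun x t => (Iic x).indicator (fun _ => φ' x) t) hFubini
  calc ∫ x in Ioc a b, G x * φ' x
      = ∫ x in Ioc a b, (G a * φ' x +
          ∫ t in Ioc a b, (Iic x).indicator (fun _ => φ' x) t ∂G.measure) := by
        refine setIntegral_congr_fun measurableSet_Ioc fun x hx => ?_
        rw [hintegral_dG x hx]
        ring
    _ = G a * (∫ x in Ioc a b, φ' x) +
          ∫ t in Ioc a b, (∫ x in Ioc a b, (Iic x).indicator (fun _ => φ' x) t) ∂G.measure := by
        rw [integral_add (hint.const_mul _) hFubini.integral_prod_left, integral_const_mul, hswap]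
    _ = G a * (φ b - φ a) + ∫ t in Ioc a b, (φ b - φ t) ∂G.measure := by
        rw [hFTC a ⟨le_rfl, hab⟩, setIntegral_congr_fun measurableSet_Ioc hintegral_dx]
    _ = G b * φ b - G a * φ a - ∫ x in Ioc a b, φ x ∂G.measure := by
        rw [integral_sub (integrable_const _) hφμ, integral_const, measureReal_restrict_apply_univ,
          G.measureReal_Ioc_s2 hab, smul_eq_mul]
        ring

theorem tendsto_setIntegral_mul_slope_s2 {f : ℝ → ℝ} (hf : Continuous f) (hab : a ≤ b) :
    Tendsto (fun ε => ∫ x in Ioc a b, G x * ((f (x + ε) - f x) / ε)) (𝓝[>] 0)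
      (𝓝 (G b * f b - G a * f a - ∫ x in Ioc a b, f x ∂G.measure)) := by
  have hparts : ∀ ε > 0, ∫ x in Ioc a b, G x * ((f (x + ε) - f x) / ε) =
      G b * forwardAverage f ε b - G a * forwardAverage f ε a -
        ∫ x in Ioc a b, forwardAverage f ε x ∂G.measure := fun ε _ =>
    G.integral_Ioc_mul_deriv hab (continuous_forwardAverage hf ε).continuousOn
      (fun x _ => hasDerivAt_forwardAverage hf ε x)
      ((((hf.comp (continuous_add_const ε)).sub hf).div_const ε).integrableOn_Icc.mono_set
        Ioc_subset_Icc_self)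
  obtain ⟨C, hC⟩ :=
    (isCompact_Icc (a := a) (b := b + 1)).exists_bound_of_continuousOn hf.continuousOn
  have hdom : Tendsto (fun ε => ∫ x in Ioc a b, forwardAverage f ε x ∂G.measure) (𝓝[>] 0)
      (𝓝 (∫ x in Ioc a b, f x ∂G.measure)) := by
    refine tendsto_integral_filter_of_dominated_convergence (fun _ => C)
      (Eventually.of_forall fun ε => (continuous_forwardAverage hf ε).aestronglyMeasurable) ?_
      (integrable_const C) (Eventually.of_forall fun x => tendsto_forwardAverage hf x)
    filter_upwards [Ioo_mem_nhdsGT (zero_lt_one' ℝ)] with ε hε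
    filter_upwards [ae_restrict_mem measurableSet_Ioc] with x hx
    exact abs_forwardAverage_le hε.1 fun y hy =>
      hC y ⟨hx.1.le.trans hy.1, by linarith [hy.2, hx.2, hε.2]⟩
  refine Tendsto.congr' (eventually_nhdsWithin_of_forall fun ε hε => (hparts ε hε).symm) ?_
  exact (((tendsto_forwardAverage hf b).const_mul _).sub
    ((tendsto_forwardAverage hf a).const_mul _)).sub hdom

end StieltjesFunction

/-- A càdlàg `g` of bounded variation is encoded as `G₁ - G₂` on `[a,b]`, so `dg = dG₁ - dG₂`. -/
theorem forward_integral_half_open_interval_by_parts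
    (a b : ℝ) (hab : a < b)
    -- `g` càdlàg of bounded variation on `[a,b]`
    (G₁ G₂ : StieltjesFunction ℝ)
    (g : ℝ → ℝ)
    (hg : ∀ x ∈ Set.Icc a b, g x = G₁ x - G₂ x)
    -- `f` continuous on `[a,b]`
    (f : ℝ → ℝ)
    (hf : ContinuousOn f (Set.Icc a b))
    -- the extension `f_J` of `f` to the real line
    (fJ : ℝ → ℝ)
    (hfJ : ∀ x, fJ x = if x < a then f a else if b < x then f b else f x) :
    Tendsto
      (fun ε : ℝ => ∫ x in Set.Ioc a b, g x * ((fJ (x + ε) - fJ x) / ε))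
      (𝓝[>] 0)
      (𝓝 (g b * f b - g a * f a -
          ((∫ x in Set.Ioc a b, f x ∂G₁.measure) - ∫ x in Set.Ioc a b, f x ∂G₂.measure))) := by
  have hfJ_eq : EqOn fJ f (Icc a b) := fun x hx => by
    simp [hfJ, hx.1.not_gt, hx.2.not_gt]
  have hfJ_cont : Continuous fJ :=
    ((hf.congr hfJ_eq).continuous_of_const_off_Icc hab.le
      (fun x hx => by simp [hfJ, hx, hab.not_gt])
      (fun x hx => by simp [hfJ, hx, hab.le, (hab.trans hx).not_gt]))
  have hslope : ∀ ε, Continuous fun x => (fJ (x + ε) - fJ x) / ε := fun ε =>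
    ((hfJ_cont.comp (continuous_add_const ε)).sub hfJ_cont).div_const ε
  have hint : ∀ (G : StieltjesFunction ℝ) ε,
      IntegrableOn (fun x => G x * ((fJ (x + ε) - fJ x) / ε)) (Ioc a b) := fun G ε =>
    ((G.mono.locallyIntegrable.integrableOn_isCompact isCompact_Icc).mul_continuousOn
      (hslope ε).continuousOn isCompact_Icc).mono_set Ioc_subset_Icc_self
  have hlim := (G₁.tendsto_setIntegral_mul_slope_s2 hfJ_cont hab.le).sub
    (G₂.tendsto_setIntegral_mul_slope_s2 hfJ_cont hab.le)
  rw [setIntegral_congr_fun measurableSet_Ioc fun x hx => hfJ_eq (Ioc_subset_Icc_self hx),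
    setIntegral_congr_fun measurableSet_Ioc fun x hx => hfJ_eq (Ioc_subset_Icc_self hx),
    hfJ_eq (left_mem_Icc.2 hab.le), hfJ_eq (right_mem_Icc.2 hab.le)] at hlim
  convert hlim using 2
  · rw [← integral_sub (hint G₁ _) (hint G₂ _)]
    refine setIntegral_congr_fun measurableSet_Ioc fun x hx => ?_
    simp only [hg x (Ioc_subset_Icc_self hx), sub_mul]
  · rw [hg a (left_mem_Icc.2 hab.le), hg b (right_mem_Icc.2 hab.le)]
    ring
end

section
/- For every continuous function w:[0,T]→ℝ, the map (s,t,η) ↦ Y_t^{s,η}, defined on the set {(s,t): 0≤s≤t≤T}×C([-T,0];ℝ) with values in C([-T,0];ℝ) (both spaces of continuous functions equipped with the uniform norm), is jointly continuous. In particular, the functional Brownian stochastic flow is a continuous random field. -/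
open Set Filter Topology

/-- For every continuous `w : [0,T] → ℝ`, the functional flow
`(s,t,η) ↦ Y_t^{s,η}`, defined on `{(s,t) : 0 ≤ s ≤ t ≤ T} × C([-T,0];ℝ)` with values in
`C([-T,0];ℝ)` (uniform norms), is jointly continuous.  In particular the functional Brownian
stochastic flow is a continuous random field. -/
theorem functional_flow_jointly_continuous
    (T : ℝ) (hT : 0 < T) (σ : ℝ)
    (w : ℝ → ℝ) (hw : ContinuousOn w (Set.Icc 0 T))
    -- the functional flow `Y s t η = Y_t^{s,η}` driven by the path `w`
    (Y : ℝ → ℝ → C(Set.Icc (-T) (0 : ℝ), ℝ) → C(Set.Icc (-T) (0 : ℝ), ℝ))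
    (hY : ∀ s t : ℝ, 0 ≤ s → s ≤ t → t ≤ T →
      ∀ (η : C(Set.Icc (-T) (0 : ℝ), ℝ)) (x : Set.Icc (-T) (0 : ℝ)),
        Y s t η x =
          if (x : ℝ) ≤ s - t then
            η (Set.projIcc (-T) 0 (neg_nonpos.mpr hT.le) ((x : ℝ) + t - s))
          else
            η (Set.projIcc (-T) 0 (neg_nonpos.mpr hT.le) 0) + σ * (w (t + x) - w s)) :
    ContinuousOn
      (fun q : (ℝ × ℝ) × C(Set.Icc (-T) (0 : ℝ), ℝ) => Y q.1.1 q.1.2 q.2)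
      {q : (ℝ × ℝ) × C(Set.Icc (-T) (0 : ℝ), ℝ) |
        0 ≤ q.1.1 ∧ q.1.1 ≤ q.1.2 ∧ q.1.2 ≤ T} := by
  have hIT : (-T : ℝ) ≤ 0 := neg_nonpos.mpr hT.le
  -- extend `w` continuously to all of `ℝ`
  set w' : ℝ → ℝ := fun r => w ((Set.projIcc 0 T hT.le r : Set.Icc (0:ℝ) T) : ℝ) with hw'def
  have hw' : Continuous w' := by
    apply hw.comp_continuous (continuous_subtype_val.comp continuous_projIcc)
    intro r; exact (Set.projIcc 0 T hT.le r).2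
  have hw'eq : ∀ r ∈ Set.Icc (0:ℝ) T, w' r = w r := by
    intro r hr
    simp only [hw'def, Set.projIcc_of_mem hT.le hr]
  -- the time-shift map
  set φ : ℝ × ℝ → C(Set.Icc (-T) (0:ℝ), Set.Icc (-T) (0:ℝ)) := fun p =>
    ⟨fun x => Set.projIcc (-T) 0 hIT (min ((x : ℝ) + p.2 - p.1) 0),
      continuous_projIcc.comp (by fun_prop)⟩ with hφ
  have hφc : Continuous φ := by
    apply ContinuousMap.continuous_of_continuous_uncurry
    simp only [hφ, ContinuousMap.coe_mk, Function.uncurry]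
    exact continuous_projIcc.comp (by fun_prop)
  -- the increment part
  set ψ : ℝ × ℝ → C(Set.Icc (-T) (0:ℝ), ℝ) := fun p =>
    ⟨fun x => σ * (w' (max (p.2 + (x : ℝ)) p.1) - w' p.1), by fun_prop⟩ with hψ
  have hψc : Continuous ψ := by
    apply ContinuousMap.continuous_of_continuous_uncurry
    simp only [hψ, ContinuousMap.coe_mk, Function.uncurry]
    fun_prop
  -- the globally continuous candidate
  have hG : Continuous (fun q : (ℝ × ℝ) × C(Set.Icc (-T) (0:ℝ), ℝ) =>
      q.2.comp (φ q.1) + ψ q.1) := by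
    apply Continuous.add
    · exact ContinuousMap.continuous_comp'.comp
        ((hφc.comp continuous_fst).prodMk continuous_snd)
    · exact hψc.comp continuous_fst
  refine hG.continuousOn.congr ?_
  rintro ⟨⟨s, t⟩, η⟩ ⟨hs, hst, htT⟩
  ext x
  obtain ⟨hx1, hx2⟩ := x.2
  rw [hY s t hs hst htT η x]
  simp only [ContinuousMap.add_apply, ContinuousMap.comp_apply, hφ, hψ,
    ContinuousMap.coe_mk]
  split_ifs with h
  · have hmin : min ((x : ℝ) + t - s) 0 = (x : ℝ) + t - s := min_eq_left (by linarith)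
    have hmax : max (t + (x : ℝ)) s = s := max_eq_right (by linarith)
    rw [hmin, hmax]
    ring
  · push_neg at h
    have hmin : min ((x : ℝ) + t - s) 0 = 0 := min_eq_right (by linarith)
    have hmax : max (t + (x : ℝ)) s = t + (x : ℝ) := max_eq_left (by linarith)
    rw [hmin, hmax, hw'eq (t + x) ⟨by linarith, by linarith⟩, hw'eq s ⟨hs, by linarith⟩]
end
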